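/- arXiv:1703.06467 — 5 statements merged into one kernel-verified Lean document; each statement's English description precedes it below -/
import Mathlib

section
/- Let f be a strongly multiplicative arithmetic function (with values in ℚ) and let f^{-1} denote its inverse under Dirichlet convolution. Then for every prime p and every integer k ≥ 1, f^{-1}(p^k) = (-1)^k f(p) (f(p) - 1)^{k-1}. -/
open ArithmeticFunction Finset

/-- An arithmetic function is *strongly multiplicative* if it is multiplicative
and `f (p ^ k) = f p` for every prime `p` and every `k ≥ 1`. -/
def StronglyMultiplicative (f : ArithmeticFunction ℚ) : Prop :=
  f.IsMultiplicative ∧ ∀ p k : ℕ, p.Prime → 1 ≤ k → f (p ^ k) = f p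

theorem sylvester_stmt1 (f finv : ArithmeticFunction ℚ)
    (hf : StronglyMultiplicative f)
    (hinv : f * finv = 1)
    (p : ℕ) (hp : p.Prime) (k : ℕ) (hk : 1 ≤ k) :
    finv (p ^ k) = (-1 : ℚ) ^ k * f p * (f p - 1) ^ (k - 1) := by
  obtain ⟨hm, hs⟩ := hf
  have hf1 : f 1 = 1 := hm.map_one
  have hfinv1 : finv 1 = 1 := by
    have := congrArg (fun g : ArithmeticFunction ℚ => g 1) hinv
    simp only [mul_apply, Nat.divisorsAntidiagonal_one, sum_singleton] at this
    simpa [hf1, ArithmeticFunction.one_apply] using this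
  -- key identity: finv (p^k) = - f p * ∑ j in range k, finv (p^j), for k ≥ 1
  have key : ∀ k : ℕ, 1 ≤ k →
      finv (p ^ k) = - f p * ∑ j ∈ Finset.range k, finv (p ^ j) := by
    intro k hk
    have hE : ∑ i ∈ Finset.range (k + 1), f (p ^ i) * finv (p ^ (k - i)) = 0 := by
      have h0 := congrArg (fun g : ArithmeticFunction ℚ => g (p ^ k)) hinv
      have hne : p ^ k ≠ 1 := Nat.one_lt_pow (by omega) hp.one_lt |>.ne'
      simp only [mul_apply, Nat.sum_divisorsAntidiagonal (fun a b => f a * finv b),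
        Nat.sum_divisors_prime_pow hp, one_apply, hne, if_false] at h0
      rw [← h0]
      refine Finset.sum_congr rfl fun i hi => ?_
      rw [Finset.mem_range] at hi
      rw [Nat.pow_div (by omega) hp.pos]
    rw [Finset.sum_range_succ'] at hE
    simp only [pow_zero, hf1, one_mul, Nat.sub_zero] at hE
    have h2 : ∑ i ∈ Finset.range k, f (p ^ (i + 1)) * finv (p ^ (k - (i + 1)))
        = f p * ∑ j ∈ Finset.range k, finv (p ^ j) := by
      rw [Finset.mul_sum]
      rw [← Finset.sum_range_reflect (fun j => f p * finv (p ^ j)) k]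
      refine Finset.sum_congr rfl fun i hi => ?_
      rw [Finset.mem_range] at hi
      rw [hs p (i + 1) hp (by omega)]
      have he : k - (i + 1) = k - 1 - i := by omega
      rw [he]
    rw [h2] at hE
    linarith
  induction k with
  | zero => omega
  | succ n ih =>
    rcases Nat.eq_or_lt_of_le hk with h1 | h1
    · simp only [← h1, pow_one]
      have := key 1 le_rfl
      simp [hfinv1] at this
      simp [this]
    · have hn : 1 ≤ n := by omega
      have ihn := ih hn
      have hrec : finv (p ^ (n + 1)) = (1 - f p) * finv (p ^ n) := by
        have k1 := key (n + 1) (by omega)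
        have k2 := key n hn
        rw [Finset.sum_range_succ] at k1
        rw [k1]
        have : - f p * ∑ j ∈ Finset.range n, finv (p ^ j) = finv (p ^ n) := k2.symm
        ring_nf
        rw [k2]
        ring
      rw [hrec, ihn]
      have hsub : n + 1 - 1 = (n - 1) + 1 := by omega
      rw [hsub, pow_succ, pow_succ]
      ring
end

section
/- Let P_n = p_1 p_2 ⋯ p_n denote the n-th primorial. Then φ̄(P_n) = ∏_{i=1}^{n} (1 - 1/p_i) and lim_{n→∞} φ̄(P_n) = 0 (limit taken in ℝ). -/
open Finset Filter

/-- `φ̄ n = φ n / n`, as a rational-valued function. -/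
def phiBar (n : ℕ) : ℚ := (Nat.totient n : ℚ) / n

/-- The sequence of primes in increasing order (0-indexed:
`nthPrime 0 = 2`, `nthPrime 1 = 3`, ...). -/
noncomputable def nthPrime (n : ℕ) : ℕ := Nat.nth Nat.Prime n

/-- The `n`-th primorialSeq `P n = p_1 * p_2 * ⋯ * p_n`. -/
noncomputable def primorialSeq (n : ℕ) : ℕ := ∏ i ∈ Finset.range n, nthPrime i

/-!
The product formula is Euler's formula `φ(n)/n = ∏_{p ∣ n} (1 - 1/p)`, since the prime factors
of `P_n` are exactly `p_1, …, p_n`. For the limit, `1 - x ≤ exp (-x)` bounds the product by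
`exp (-∑_{i<n} 1/p_i)`, which tends to `0` because the sum of the reciprocals of the primes
diverges.
-/

lemma nthPrime_prime (n : ℕ) : (nthPrime n).Prime :=
  Nat.nth_mem_of_infinite Nat.infinite_setOfPred_prime n

lemma nthPrime_injective : Function.Injective nthPrime :=
  Nat.nth_injective Nat.infinite_setOfPred_prime

lemma primorialSeq_ne_zero (n : ℕ) : primorialSeq n ≠ 0 :=
  prod_ne_zero_iff.2 fun i _ => (nthPrime_prime i).ne_zero

lemma primeFactors_primorialSeq (n : ℕ) :
    (primorialSeq n).primeFactors = (range n).image nthPrime := by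
  have hprod : primorialSeq n = ∏ p ∈ (range n).image nthPrime, p := by
    rw [prod_image fun i _ j _ h => nthPrime_injective h]
    rfl
  rw [hprod]
  refine Nat.primeFactors_prod fun p hp => ?_
  obtain ⟨i, -, rfl⟩ := mem_image.mp hp
  exact nthPrime_prime i

lemma phiBar_eq_prod_primeFactors {n : ℕ} (hn : n ≠ 0) :
    phiBar n = ∏ p ∈ n.primeFactors, (1 - 1 / (p : ℚ)) := by
  rw [phiBar, Nat.totient_eq_mul_prod_factors, mul_div_cancel_left₀ _ (by exact_mod_cast hn)]
  simp only [one_div]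

lemma phiBar_primorialSeq (n : ℕ) :
    phiBar (primorialSeq n) = ∏ i ∈ range n, (1 - 1 / (nthPrime i : ℚ)) := by
  rw [phiBar_eq_prod_primeFactors (primorialSeq_ne_zero n), primeFactors_primorialSeq,
    prod_image fun i _ j _ h => nthPrime_injective h]

lemma not_summable_one_div_nthPrime : ¬ Summable fun i => 1 / (nthPrime i : ℝ) := by
  have hrange : Set.range nthPrime = {p | p.Prime} :=
    Nat.range_nth_of_infinite Nat.infinite_setOfPred_prime
  have h := not_summable_one_div_on_primes
  rw [← nthPrime_injective.summable_iff fun p hp => Set.indicator_of_notMem (hrange ▸ hp) _] at h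
  refine fun hs => h (hs.congr fun i => ?_)
  rw [Function.comp_apply, Set.indicator_of_mem (s := {p : ℕ | p.Prime}) (nthPrime_prime i)]

theorem tendsto_prod_range_one_sub_of_not_summable {a : ℕ → ℝ} (h0 : ∀ i, 0 ≤ a i)
    (h1 : ∀ i, a i ≤ 1) (hs : ¬ Summable a) :
    Tendsto (fun n => ∏ i ∈ range n, (1 - a i)) atTop (nhds 0) := by
  have hsum : Tendsto (fun n => ∑ i ∈ range n, a i) atTop atTop :=
    (not_summable_iff_tendsto_nat_atTop_of_nonneg h0).mp hs
  refine squeeze_zero (fun n => prod_nonneg fun i _ => sub_nonneg.2 (h1 i)) (fun n => ?_)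
    (Real.tendsto_exp_atBot.comp (tendsto_neg_atTop_atBot.comp hsum))
  calc ∏ i ∈ range n, (1 - a i)
      ≤ ∏ i ∈ range n, Real.exp (-a i) :=
        prod_le_prod (fun i _ => sub_nonneg.2 (h1 i)) fun i _ => Real.one_sub_le_exp_neg _
    _ = Real.exp (-∑ i ∈ range n, a i) := by rw [← sum_neg_distrib, Real.exp_sum]

theorem sylvester_stmt13 :
    (∀ n : ℕ, phiBar (primorialSeq n) =
      ∏ i ∈ Finset.range n, (1 - 1 / (nthPrime i : ℚ))) ∧
    Tendsto (fun n => ((phiBar (primorialSeq n) : ℚ) : ℝ)) atTop (nhds 0) := by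
  refine ⟨phiBar_primorialSeq, ?_⟩
  have hcast (n : ℕ) : ((phiBar (primorialSeq n) : ℚ) : ℝ) =
      ∏ i ∈ range n, (1 - 1 / (nthPrime i : ℝ)) := by
    simp [phiBar_primorialSeq]
  simp only [hcast]
  exact tendsto_prod_range_one_sub_of_not_summable (fun i => by positivity)
    (fun i => div_le_one_of_le₀ (by exact_mod_cast (nthPrime_prime i).one_lt.le) (by positivity))
    not_summable_one_div_nthPrime
end

section
/- The range of the Sylvester factor 𝒮, viewed as a subset of ℝ (i.e., the set { 𝒮(n) : n ∈ ℕ, n ≥ 1 } ⊆ ℝ), is totally disconnected and has no isolated points (every point of the range is an accumulation point of the range). -/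
open Finset Filter

/-- The Sylvester factor `𝒮 n = ∏_{p ∣ n, p odd prime} (p-1)/(p-2)`. -/
noncomputable def sylvester (n : ℕ) : ℚ :=
  ∏ p ∈ n.primeFactors.erase 2, ((p : ℚ) - 1) / ((p : ℚ) - 2)

/-- The range of the Sylvester factor, viewed as a subset of `ℝ`. -/
noncomputable def sylvesterRange : Set ℝ :=
  {x : ℝ | ∃ n : ℕ, 1 ≤ n ∧ ((sylvester n : ℚ) : ℝ) = x}

/-!
The range consists of rationals, so it is countable and hence totally disconnected.
For accumulation, multiply `n` by a large prime `p ∤ n`: this multiplies `𝒮 n` by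
`(p-1)/(p-2) = 1 + 1/(p-2)`, a factor different from `1` that tends to `1`.
-/

open Topology

lemma sylvester_pos (n : ℕ) : 0 < sylvester n := by
  refine Finset.prod_pos fun p hp => ?_
  obtain ⟨hp2, hp⟩ := Finset.mem_erase.1 hp
  have h3 : (3 : ℚ) ≤ p := by
    exact_mod_cast (Nat.prime_of_mem_primeFactors hp).two_le.lt_of_ne' hp2
  exact div_pos (by linarith) (by linarith)

lemma sylvester_mul_prime {n p : ℕ} (hn : n ≠ 0) (hp : p.Prime) (hp2 : p ≠ 2)
    (hpn : ¬p ∣ n) :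
    sylvester (n * p) = sylvester n * (((p : ℚ) - 1) / ((p : ℚ) - 2)) := by
  have hfac : (n * p).primeFactors = insert p n.primeFactors := by
    rw [Nat.primeFactors_mul hn hp.ne_zero, hp.primeFactors, Finset.union_comm]
    rfl
  have hmem : p ∉ n.primeFactors.erase 2 := fun h =>
    hpn (Nat.dvd_of_mem_primeFactors (Finset.mem_of_mem_erase h))
  rw [sylvester, sylvester, hfac, Finset.erase_insert_of_ne hp2, Finset.prod_insert hmem,
    mul_comm]

lemma sylvesterRange_countable : sylvesterRange.Countable :=
  (Set.countable_range ((↑) : ℚ → ℝ)).mono <| by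
    rintro x ⟨n, -, rfl⟩
    exact ⟨sylvester n, rfl⟩

lemma tendsto_sub_one_div_sub_two_atTop :
    Tendsto (fun t : ℝ => (t - 1) / (t - 2)) atTop (𝓝 1) := by
  have h : Tendsto (fun t : ℝ => 1 + (t - 2)⁻¹) atTop (𝓝 (1 + 0)) :=
    tendsto_const_nhds.add
      (tendsto_inv_atTop_zero.comp (tendsto_atTop_add_const_right _ _ tendsto_id))
  rw [add_zero] at h
  refine h.congr' ?_
  filter_upwards [eventually_gt_atTop 2] with t ht
  field_simp [(sub_pos.2 ht).ne']
  ring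

lemma accPt_sylvesterRange {n : ℕ} (hn : 1 ≤ n) :
    AccPt ((sylvester n : ℚ) : ℝ) (𝓟 sylvesterRange) := by
  set x : ℝ := ((sylvester n : ℚ) : ℝ)
  have hx : x ≠ 0 := Rat.cast_ne_zero.2 (sylvester_pos n).ne'
  have hlim : Tendsto (fun p : ℕ => x * (((p : ℝ) - 1) / ((p : ℝ) - 2))) atTop (𝓝 x) := by
    simpa using (tendsto_sub_one_div_sub_two_atTop.comp tendsto_natCast_atTop_atTop).const_mul x
  have hprimes : ∃ᶠ p in atTop, p.Prime ∧ n < p ∧ 2 < p :=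
    (Nat.frequently_atTop_iff_infinite.2 Nat.infinite_setOfPred_prime).and_eventually
      ((eventually_gt_atTop n).and (eventually_gt_atTop 2))
  rw [accPt_iff_frequently]
  refine hlim.frequently (hprimes.mono fun p ⟨hp, hnp, h2p⟩ => ⟨?_, n * p, ?_, ?_⟩)
  · have h2p' : (2 : ℝ) < p := by exact_mod_cast h2p
    rw [Ne, mul_eq_left₀ hx, div_eq_one_iff_eq (sub_pos.2 h2p').ne']
    linarith
  · exact Nat.one_le_iff_ne_zero.2 (mul_ne_zero (by omega) hp.ne_zero)
  · rw [sylvester_mul_prime (by omega) hp h2p.ne' (fun h => (Nat.le_of_dvd hn h).not_gt hnp)]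
    push_cast
    rfl

theorem sylvester_stmt17 :
    IsTotallyDisconnected sylvesterRange ∧
    ∀ x ∈ sylvesterRange, AccPt x (𝓟 sylvesterRange) := by
  refine ⟨sylvesterRange_countable.isTotallyDisconnected, ?_⟩
  rintro x ⟨n, hn, rfl⟩
  exact accPt_sylvesterRange hn
end

section
/- The range of φ̄, viewed as a subset of ℝ (i.e., the set { φ(n)/n : n ∈ ℕ, n ≥ 1 } ⊆ ℝ), is totally disconnected and has no isolated points (every point of the range is an accumulation point of the range). -/
open Filter

/-- The range of `φ̄`, viewed as a subset of `ℝ`. -/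
noncomputable def phiBarRange : Set ℝ :=
  {x : ℝ | ∃ n : ℕ, 1 ≤ n ∧ ((phiBar n : ℚ) : ℝ) = x}

lemma countable_isTotallyDisconnected {s : Set ℝ} (hs : s.Countable) :
    IsTotallyDisconnected s := by
  intro t hts hconn a ha b hb
  by_contra hab
  have key : ∀ u v : ℝ, u < v → u ∈ t → v ∈ t → False := by
    intro u v huv hu hv
    have hIcc : Set.Icc u v ⊆ t := hconn.ordConnected.out hu hv
    have hc : (Set.Icc u v).Countable := (hs.mono hts).mono hIcc
    have h1 : (Cardinal.mk (Set.Icc u v)) ≤ Cardinal.aleph0 :=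
      Cardinal.le_aleph0_iff_set_countable.mpr hc
    rw [Cardinal.mk_Icc_real huv] at h1
    exact absurd h1 (not_le.mpr (Cardinal.aleph0_lt_continuum))
  rcases lt_or_gt_of_ne hab with h | h
  · exact key a b h ha hb
  · exact key b a h hb ha

lemma phiBar_mul_prime {n p : ℕ} (hn : 1 ≤ n) (hp : p.Prime) (hcop : Nat.Coprime p n) :
    ((phiBar (p * n) : ℚ) : ℝ) = ((phiBar n : ℚ) : ℝ) * (1 - 1 / p) := by
  have h1 : Nat.totient (p * n) = (p - 1) * Nat.totient n := by
    rw [Nat.totient_mul hcop, Nat.totient_prime hp]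
  have hp0 : (p : ℝ) ≠ 0 := Nat.cast_ne_zero.mpr hp.pos.ne'
  have hn0 : (n : ℝ) ≠ 0 := Nat.cast_ne_zero.mpr (by omega)
  have hp1 : 1 ≤ p := hp.one_lt.le
  simp only [phiBar, h1]
  push_cast [Nat.cast_sub hp1]
  field_simp

theorem sylvester_stmt18 :
    IsTotallyDisconnected phiBarRange ∧
    ∀ x ∈ phiBarRange, AccPt x (𝓟 phiBarRange) := by
  constructor
  · apply countable_isTotallyDisconnected
    have : phiBarRange ⊆ Set.range (fun n : ℕ => ((phiBar n : ℚ) : ℝ)) := by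
      rintro x ⟨n, _, rfl⟩; exact ⟨n, rfl⟩
    exact (Set.countable_range _).mono this
  · rintro x ⟨n, hn, rfl⟩
    set x : ℝ := ((phiBar n : ℚ) : ℝ) with hx
    have hx_pos : 0 < x := by
      rw [hx]
      have h1 : 0 < Nat.totient n := Nat.totient_pos.mpr (by omega)
      have h2 : 0 < n := by omega
      simp only [phiBar]
      push_cast
      positivity
    have hx_le : x ≤ 1 := by
      rw [hx]
      have h1 : Nat.totient n ≤ n := Nat.totient_le n
      simp only [phiBar]
      push_cast
      rw [div_le_one (by exact_mod_cast Nat.pos_of_ne_zero (by omega))]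
      exact_mod_cast h1
    rw [accPt_iff_nhds]
    intro U hU
    rcases Metric.mem_nhds_iff.mp hU with ⟨ε, hε, hball⟩
    obtain ⟨N, hN⟩ := exists_nat_one_div_lt hε
    obtain ⟨p, hp_ge, hp_prime⟩ := Nat.exists_infinite_primes (max (n + 1) (N + 1))
    have hpn : ¬ p ∣ n := by
      intro hdvd
      have := Nat.le_of_dvd (by omega) hdvd
      have := le_of_max_le_left hp_ge
      omega
    have hcop : Nat.Coprime p n := (Nat.Prime.coprime_iff_not_dvd hp_prime).mpr hpn
    have hpR : (1 : ℝ) < p := by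
      exact_mod_cast hp_prime.one_lt
    set y : ℝ := ((phiBar (p * n) : ℚ) : ℝ) with hy
    have hy_eq : y = x * (1 - 1 / p) := phiBar_mul_prime hn hp_prime hcop
    have h1p : (0 : ℝ) < 1 / p := by positivity
    have hy_lt : y < x := by
      rw [hy_eq]
      nlinarith
    have hy_mem : y ∈ phiBarRange := ⟨p * n, Nat.mul_pos hp_prime.pos (by omega), rfl⟩
    refine ⟨y, ⟨hball ?_, hy_mem⟩, hy_lt.ne⟩
    rw [Metric.mem_ball, Real.dist_eq, abs_sub_lt_iff]
    constructor
    · linarith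
    · have hxy : x - y = x * (1 / p) := by rw [hy_eq]; ring
      have hple : (1 : ℝ) / p ≤ 1 / (N + 1) := by
        apply one_div_le_one_div_of_le (by positivity)
        have := le_of_max_le_right hp_ge
        exact_mod_cast this
      have : x - y ≤ 1 / p := by
        rw [hxy]
        nlinarith
      linarith
end

section
/- Let q_1 < q_2 < ⋯ < q_t be distinct odd primes and set m = 2 q_1 ⋯ q_t. For a positive integer n, let s_m^*(n) denote the number of ordered pairs (r̄, s̄) of units of ℤ/mℤ with r̄ + s̄ = n̄. Then for every positive integer n, with d = gcd(2n, m), one has s_m^*(2n) = 𝒮(d) · s_m^*(2) (equality of rational numbers). -/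
/-!
By the Chinese remainder theorem `ZMod m ≃+* Π p ∣ m, ZMod p`, and a representation `n = r + s`
by units splits into one modulo each prime, so `s_m^*(n) = ∏_{p ∣ m} s_p^*(n)`. In the field
`ZMod p` the unit `r` can be anything except `0` and `n`, which gives `p - 1` representations if
`p ∣ n` and `p - 2` otherwise. For even arguments the factor at `2` is `1`, so `s_m^*(2n)` and
`s_m^*(2)` differ exactly by the factors `(p - 1)/(p - 2)` at the odd primes `p ∣ gcd(2n, m)`.
-/

open Finset

open scoped Function

noncomputable def unitSumCount (R : Type*) [Ring R] (z : R) : ℕ :=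
  Nat.card {x : Rˣ × Rˣ // (x.1 : R) + x.2 = z}

theorem unitSumCount_ringEquiv {R S : Type*} [Ring R] [Ring S] (e : R ≃+* S) (z : R) :
    unitSumCount S (e z) = unitSumCount R z := by
  let u := (Units.mapEquiv e.toMulEquiv).toEquiv
  refine Nat.card_congr (Equiv.subtypeEquiv (u.prodCongr u) fun x => ?_).symm
  simp [u, ← map_add, e.injective.eq_iff]

theorem unitSumCount_pi {ι : Type*} [Fintype ι] (R : ι → Type*) [∀ i, Ring (R i)]
    (z : Π i, R i) : unitSumCount (Π i, R i) z = ∏ i, unitSumCount (R i) (z i) := by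
  let u := (MulEquiv.piUnits (M := R)).toEquiv
  refine (Nat.card_congr ?_).trans Nat.card_pi
  refine (Equiv.subtypeEquiv ((u.prodCongr u).trans (Equiv.arrowProdEquivProdArrow _ _ _).symm)
    fun x => ?_).trans Equiv.subtypePiEquivPi
  simp [u, funext_iff]

theorem unitSumCount_of_field {F : Type*} [Field F] [Fintype F] [DecidableEq F] (z : F) :
    unitSumCount F z = if z = 0 then Fintype.card F - 1 else Fintype.card F - 2 := by
  let e : {x : Fˣ × Fˣ // (x.1 : F) + x.2 = z} ≃ {r : F // r ∉ ({0, z} : Finset F)} :=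
    { toFun := fun x => ⟨x.1.1, by
        simp only [mem_insert, mem_singleton, not_or]
        refine ⟨x.1.1.ne_zero, fun h => x.1.2.ne_zero ?_⟩
        linear_combination x.2 - h⟩
      invFun := fun r => ⟨(Units.mk0 r.1 (by grind), Units.mk0 (z - r.1) (by grind)), by simp⟩
      left_inv := fun x => by
        ext
        · simp
        · simp only [Units.val_mk0]; linear_combination -x.2
      right_inv := fun r => rfl }
  rw [unitSumCount, Nat.card_congr e, Nat.card_eq_fintype_card, Fintype.card_subtype_compl,
    Fintype.card_coe]
  split_ifs with hz
  · simp [hz]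
  · rw [card_pair (Ne.symm hz)]

theorem unitSumCount_zmod_prime (p : ℕ) [Fact p.Prime] (k : ℕ) :
    (unitSumCount (ZMod p) k : ℚ) = if p ∣ k then (p : ℚ) - 1 else p - 2 := by
  have hp := (Fact.out : p.Prime).two_le
  rw [unitSumCount_of_field, ZMod.card]
  simp only [ZMod.natCast_eq_zero_iff]
  split_ifs <;> push_cast [Nat.cast_sub (by omega : 1 ≤ p), Nat.cast_sub hp] <;> rfl

theorem unitSumCount_zmod_prod_primes (S : Finset ℕ) (hS : ∀ p ∈ S, p.Prime) (k : ℕ) :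
    (unitSumCount (ZMod (∏ p ∈ S, p)) k : ℚ) = ∏ p ∈ S, if p ∣ k then (p : ℚ) - 1 else p - 2 := by
  have hcop : Pairwise (Nat.Coprime on fun p : S => (p : ℕ)) := fun p q hpq =>
    (Nat.coprime_primes (hS p p.2) (hS q q.2)).2 (Subtype.val_injective.ne hpq)
  rw [← prod_coe_sort S fun p => p, ← unitSumCount_ringEquiv (ZMod.prodEquivPi _ hcop),
    map_natCast, unitSumCount_pi, Nat.cast_prod, ← prod_coe_sort S]
  refine prod_congr rfl fun p _ => ?_
  have : Fact (p : ℕ).Prime := ⟨hS p p.2⟩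
  exact unitSumCount_zmod_prime p k

theorem primeFactors_gcd_prod_primes (S : Finset ℕ) (hS : ∀ p ∈ S, p.Prime) (k : ℕ) :
    (k.gcd (∏ p ∈ S, p)).primeFactors = S.filter (· ∣ k) := by
  have hprod : ∏ p ∈ S, p ≠ 0 := prod_ne_zero_iff.2 fun p hp => (hS p hp).ne_zero
  ext q
  have hmem : q ∈ S ↔ q.Prime ∧ q ∣ ∏ p ∈ S, p := by
    rw [← Nat.mem_primeFactors_of_ne_zero hprod, Nat.primeFactors_prod hS]
  simp only [mem_filter, hmem, Nat.mem_primeFactors, Nat.dvd_gcd_iff, ne_eq,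
    Nat.gcd_ne_zero_right hprod, not_false_eq_true, and_true]
  tauto

theorem prod_ite_eq_prod_filter_div_mul {ι K : Type*} [Field K] (s : Finset ι) (P : ι → Prop)
    [DecidablePred P] (f g : ι → K) (hg : ∀ i ∈ s, g i ≠ 0) :
    ∏ i ∈ s, (if P i then f i else g i) = (∏ i ∈ s.filter P, f i / g i) * ∏ i ∈ s, g i := by
  rw [prod_filter, ← prod_mul_distrib]
  refine prod_congr rfl fun i hi => ?_
  split_ifs
  · rw [div_mul_cancel₀ _ (hg i hi)]
  · rw [one_mul]

theorem sylvester_stmt19_general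
    (Q : Finset ℕ) (hQ : ∀ q ∈ Q, q.Prime ∧ q ≠ 2)
    (m : ℕ) (hm : m = 2 * ∏ q ∈ Q, q)
    (s : ℕ → ℕ)
    (hs : ∀ n : ℕ, s n =
      Nat.card {x : (ZMod m)ˣ × (ZMod m)ˣ //
        ((x.1 : ZMod m) + (x.2 : ZMod m) = (n : ZMod m))})
    (n : ℕ) :
    (s (2 * n) : ℚ) = sylvester (Nat.gcd (2 * n) m) * (s 2 : ℚ) := by
  have h2Q : 2 ∉ Q := fun h => (hQ 2 h).2 rfl
  have hprime : ∀ p ∈ insert 2 Q, p.Prime := by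
    simpa [Nat.prime_two] using fun q hq => (hQ q hq).1
  replace hm : m = ∏ p ∈ insert 2 Q, p := by rw [prod_insert h2Q, hm]
  subst hm
  have hs_even (k : ℕ) : (s (2 * k) : ℚ) = ∏ q ∈ Q, if q ∣ 2 * k then (q : ℚ) - 1 else q - 2 := by
    rw [hs, ← unitSumCount, unitSumCount_zmod_prod_primes _ hprime, prod_insert h2Q,
      if_pos (dvd_mul_right 2 k)]
    norm_num
  have hs_two : (s 2 : ℚ) = ∏ q ∈ Q, ((q : ℚ) - 2) := by
    rw [← mul_one 2, hs_even 1]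
    refine prod_congr rfl fun q hq => if_neg fun hdvd => (hQ q hq).2 ?_
    exact (Nat.prime_dvd_prime_iff_eq (hQ q hq).1 Nat.prime_two).1 hdvd
  have hfactors : (Nat.gcd (2 * n) (∏ p ∈ insert 2 Q, p)).primeFactors.erase 2 =
      Q.filter (· ∣ 2 * n) := by
    rw [primeFactors_gcd_prod_primes _ hprime, filter_insert, if_pos (dvd_mul_right 2 n),
      erase_insert fun h => h2Q (mem_filter.1 h).1]
  rw [hs_even, hs_two, sylvester, hfactors]
  exact prod_ite_eq_prod_filter_div_mul _ _ _ _ fun q hq =>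
    sub_ne_zero.2 (by exact_mod_cast (hQ q hq).2)

theorem sylvester_stmt19
    (Q : Finset ℕ) (hQ : ∀ q ∈ Q, q.Prime ∧ q ≠ 2)
    (m : ℕ) (hm : m = 2 * ∏ q ∈ Q, q)
    (s : ℕ → ℕ)
    (hs : ∀ n : ℕ, s n =
      Nat.card {x : (ZMod m)ˣ × (ZMod m)ˣ //
        ((x.1 : ZMod m) + (x.2 : ZMod m) = (n : ZMod m))})
    (n : ℕ) (hn : 1 ≤ n) :
    (s (2 * n) : ℚ) = sylvester (Nat.gcd (2 * n) m) * (s 2 : ℚ) :=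
  sylvester_stmt19_general Q hQ m hm s hs n
end
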